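/- Let n ≥ 3 be an integer and let G_0 be the graph with vertex set {v_{i,p} : i ∈ {1,2,3}, 1 ≤ p ≤ n} \ {v_{2,n}} where for each i ∈ {1,2,3} the surviving vertices with first index i form a complete graph, v_{1,p} is adjacent to v_{2,p} and v_{2,p} is adjacent to v_{3,p} for each 1 ≤ p ≤ n − 1, and additionally v_{1,n} is adjacent to v_{3,n} (i.e., G_0 is obtained from K_n □ P_3 by deleting the middle vertex v_{2,n} of the induced path v_{1,n}v_{2,n}v_{3,n} and adding the edge v_{1,n}v_{3,n}). Then G_0 is n-regular and minimally ((n+1)/3)-tough. -/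

import Mathlib

open SimpleGraph

noncomputable def numComp {V : Type*} (G : SimpleGraph V) (S : Set V) : ℕ :=
  Nat.card (G.induce Sᶜ).ConnectedComponent

def Tough {V : Type*} (t : ℝ) (G : SimpleGraph V) : Prop :=
  ∀ S : Set V, 2 ≤ numComp G S → t * (numComp G S : ℝ) ≤ (S.ncard : ℝ)

def MinTough {V : Type*} (t : ℝ) (G : SimpleGraph V) : Prop :=
  Tough t G ∧ ∀ e ∈ G.edgeSet, ¬ Tough t (G.deleteEdges {e})

noncomputable def ndeg {V : Type*} (G : SimpleGraph V) (v : V) : ℕ :=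
  (G.neighborSet v).ncard

def delVert (n : ℕ) (h : 0 < n) : Fin 3 × Fin n :=
  (1, ⟨n - 1, Nat.sub_lt h Nat.one_pos⟩)

def G0 (n : ℕ) (h : 0 < n) : SimpleGraph {x : Fin 3 × Fin n // x ≠ delVert n h} :=
  SimpleGraph.fromRel (fun x y =>
    (x.1.1 = y.1.1 ∧ x.1.2 ≠ y.1.2) ∨
    (x.1.2 = y.1.2 ∧ x.1.1.val + 1 = y.1.1.val) ∨
    (x.1 = (0, ⟨n - 1, Nat.sub_lt h Nat.one_pos⟩) ∧
     y.1 = (2, ⟨n - 1, Nat.sub_lt h Nat.one_pos⟩)))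

/-!
Every row of `G0` is a clique, so the surviving part of a row lies in a single component of
`G0 - S`, and there are at most three components. If `G0 - S` is disconnected, `S` meets every
column except possibly the last one (an intact column joins all three rows); and either `S`
meets the last column as well, or a surviving middle vertex is cut off from both outer rows,
which puts the two outer vertices of its column into `S`. Counting columns gives `|S| ≥ n`,
and `|S| ≥ n + 1` with three components, which is `(n + 1) / 3`-toughness. For each kind of
edge `e` an explicit set `S` has too few vertices for the number of components of
`G0 - e - S`; the components are certified by a labelling of the surviving vertices that is
constant along edges.
-/

open Set

section Components

variable {V : Type*} {G : SimpleGraph V} {S : Set V}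

lemma ncard_le_of_injOn_lt {α : Type*} {s : Set α} {m : ℕ} (φ : α → ℕ)
    (hφ : ∀ a ∈ s, φ a < m) (hinj : InjOn φ s) : s.ncard ≤ m :=
  (ncard_le_ncard_of_injOn φ hφ hinj).trans_eq (ncard_Iio_nat m)

lemma ncard_le_of_subset_image [Finite V] {β : Type*} {f : V → β} {s : Set V} {A : Set β}
    (hA : A ⊆ f '' s) : A.ncard ≤ s.ncard :=
  (ncard_le_ncard hA (toFinite _)).trans (ncard_image_le (toFinite s))

lemma ncard_lt_of_subset_image [Finite V] {β : Type*} {f : V → β} {s : Set V} {A : Set β}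
    (hA : A ⊆ f '' s) (hf : ¬ InjOn f s) : A.ncard < s.ncard :=
  (ncard_le_ncard hA (toFinite _)).trans_lt
    ((ncard_image_le (toFinite s)).lt_of_ne (mt (ncard_image_iff (toFinite s)).1 hf))

lemma label_eq_of_reachable {L : V → ℕ} (hL : ∀ a b, a ∉ S → b ∉ S → G.Adj a b → L a = L b)
    {u v : ↥Sᶜ} (huv : (G.induce Sᶜ).Reachable u v) : L u = L v := by
  obtain ⟨w⟩ := huv
  induction w with
  | nil => rfl
  | @cons u v _ hadj _ ih => exact (hL _ _ u.2 v.2 hadj).trans ih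

lemma le_numComp_of_labeling [Finite V] {k : ℕ} (L : V → ℕ)
    (hL : ∀ a b, a ∉ S → b ∉ S → G.Adj a b → L a = L b)
    (hsurj : ∀ i < k, ∃ a ∉ S, L a = i) : k ≤ numComp G S := by
  choose a haS haL using hsurj
  have hinj : Function.Injective
      fun i : Fin k => (G.induce Sᶜ).connectedComponentMk ⟨a i i.2, haS i i.2⟩ := by
    intro i j hij
    have := label_eq_of_reachable hL (ConnectedComponent.eq.1 hij)
    exact Fin.ext (by simpa [haL] using this)
  simpa [numComp] using Nat.card_le_card_of_injective _ hinj

lemma not_tough_of_labeling [Finite V] {t : ℝ} (ht : 0 ≤ t) (S : Set V) {k m : ℕ} (hk : 2 ≤ k)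
    (hm : (m : ℝ) < t * k) (L : V → ℕ) (hL : ∀ a b, a ∉ S → b ∉ S → G.Adj a b → L a = L b)
    (hsurj : ∀ i < k, ∃ a ∉ S, L a = i) (φ : V → ℕ) (hφ : ∀ a ∈ S, φ a < m)
    (hinj : InjOn φ S) : ¬ Tough t G := by
  intro htough
  have hcomp := le_numComp_of_labeling L hL hsurj
  have hS : (S.ncard : ℝ) ≤ m := by exact_mod_cast ncard_le_of_injOn_lt φ hφ hinj
  have := htough S (hk.trans hcomp)
  have : t * k ≤ t * numComp G S := by gcongr
  linarith

lemma eq_of_reachable_out {W : Type*} {H : SimpleGraph W} {c d : H.ConnectedComponent}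
    (hcd : H.Reachable c.out d.out) : c = d :=
  c.out_eq.symm.trans ((ConnectedComponent.eq.2 hcd).trans d.out_eq)

lemma numComp_le_of_reachable {β : Type*} [Finite β] (f : ↥Sᶜ → β)
    (hf : ∀ u v, f u = f v → (G.induce Sᶜ).Reachable u v) : numComp G S ≤ Nat.card β :=
  Nat.card_le_card_of_injective (fun c => f c.out) fun _ _ hcd => eq_of_reachable_out (hf _ _ hcd)

lemma surjective_and_reachable_iff_of_card_le_numComp {β : Type*} [Finite β] (f : ↥Sᶜ → β)
    (hf : ∀ u v, f u = f v → (G.induce Sᶜ).Reachable u v) (hcard : Nat.card β ≤ numComp G S) :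
    Function.Surjective f ∧ ∀ u v, (G.induce Sᶜ).Reachable u v ↔ f u = f v := by
  set g : (G.induce Sᶜ).ConnectedComponent → β := fun c => f c.out
  have hg : Function.Bijective g := Function.Injective.bijective_of_nat_card_le
    (fun _ _ hcd => eq_of_reachable_out (hf _ _ hcd)) hcard
  have hfg : ∀ u, f u = g ((G.induce Sᶜ).connectedComponentMk u) := by
    intro u
    obtain ⟨c, hc⟩ := hg.2 (f u)
    rw [← hc]
    exact congrArg g (c.out_eq.symm.trans (ConnectedComponent.eq.2 (hf _ _ hc)))
  refine ⟨fun b => ?_, fun u v => ⟨fun huv => by rw [hfg u, hfg v, ConnectedComponent.eq.2 huv],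
    hf u v⟩⟩
  obtain ⟨c, rfl⟩ := hg.2 b
  exact ⟨c.out, rfl⟩

lemma exists_not_reachable_of_two_le_numComp [Finite V] (h2 : 2 ≤ numComp G S) :
    ∃ u v : ↥Sᶜ, ¬ (G.induce Sᶜ).Reachable u v := by
  obtain ⟨c, d, hcd⟩ :=
    (Finite.one_lt_card_iff_nontrivial (α := (G.induce Sᶜ).ConnectedComponent)).1 h2
  exact ⟨c.out, d.out, fun hr => hcd (eq_of_reachable_out hr)⟩

end Components

namespace G0

variable {n : ℕ} {h : 0 < n}

abbrev Vert (n : ℕ) (h : 0 < n) := {x : Fin 3 × Fin n // x ≠ delVert n h}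

def row (x : Vert n h) : ℕ := x.1.1
def col (x : Vert n h) : ℕ := x.1.2

lemma coords_spec (x : Vert n h) : row x < 3 ∧ col x < n ∧ (row x = 1 → col x ≠ n - 1) := by
  refine ⟨x.1.1.isLt, x.1.2.isLt, fun hx hc => x.2 ?_⟩
  ext <;> simp_all [row, col, delVert]

lemma eq_iff_row_col {x y : Vert n h} : x = y ↔ row x = row y ∧ col x = col y := by
  simp [row, col, Subtype.ext_iff, Prod.ext_iff, Fin.ext_iff]

lemma exists_row_col (i p : ℕ) (hi : i < 3) (hp : p < n) (hip : i = 1 → p ≠ n - 1) :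
    ∃ x : Vert n h, row x = i ∧ col x = p := by
  refine ⟨⟨(⟨i, hi⟩, ⟨p, hp⟩), fun he => ?_⟩, rfl, rfl⟩
  simp [delVert, Prod.ext_iff, Fin.ext_iff] at he
  omega

lemma adj_iff {x y : Vert n h} : (G0 n h).Adj x y ↔
    (row x = row y ∧ col x ≠ col y) ∨
      (col x = col y ∧ row x ≠ row y ∧ (row x = 1 ∨ row y = 1 ∨ col x = n - 1)) := by
  have := coords_spec x; have := coords_spec y
  simp only [G0, fromRel_adj, ne_eq, eq_iff_row_col, Prod.ext_iff, Fin.ext_iff]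
  simp only [row, col] at *
  omega

lemma deleteEdges_adj_iff {x y a b : Vert n h} : ((G0 n h).deleteEdges {s(x, y)}).Adj a b ↔
    (G0 n h).Adj a b ∧ ¬ ((row a = row x ∧ col a = col x ∧ row b = row y ∧ col b = col y) ∨
      (row a = row y ∧ col a = col y ∧ row b = row x ∧ col b = col x)) := by
  simp only [deleteEdges_adj, mem_singleton_iff, Sym2.eq_iff, eq_iff_row_col, and_assoc]

lemma ndeg_eq (v : Vert n h) : ndeg (G0 n h) v = n := by
  have := coords_spec v
  -- a neighbour goes to its column, except that the row-2 neighbour of a middle vertex goes to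
  -- `n - 1`, the column missing from the middle row
  refine (ncard_congr (t := Iio n) (fun w _ => if row v = 1 ∧ row w = 2 then n - 1 else col w)
    ?_ ?_ ?_).trans (ncard_Iio_nat n)
  · intro w hw
    have := coords_spec w
    rw [mem_neighborSet, adj_iff] at hw
    simp only [mem_Iio]
    split_ifs <;> omega
  · intro a b ha hb hab
    rw [mem_neighborSet, adj_iff] at ha hb
    have := coords_spec a; have := coords_spec b
    exact eq_iff_row_col.2 ⟨by grind, by grind⟩
  · intro k hk
    simp only [mem_Iio] at hk
    by_cases hk' : k = col v
    · obtain ⟨w, hw⟩ := exists_row_col (h := h)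
        (if row v = 1 then 0 else if k = n - 1 then 2 - row v else 1) k
        (by split_ifs <;> omega) hk (by split_ifs <;> omega)
      exact ⟨w, by rw [mem_neighborSet, adj_iff]; grind, by grind⟩
    · obtain ⟨w, hw⟩ := exists_row_col (h := h) (if row v = 1 ∧ k = n - 1 then 2 else row v)
        (if row v = 1 ∧ k = n - 1 then col v else k)
        (by split_ifs <;> omega) (by split_ifs <;> omega) (by split_ifs <;> omega)
      exact ⟨w, by rw [mem_neighborSet, adj_iff]; grind, by grind⟩

section Toughness

variable {S : Set (Vert n h)}

lemma reachable_of_row_eq {u v : ↥Sᶜ} (huv : row u.1 = row v.1) :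
    ((G0 n h).induce Sᶜ).Reachable u v := by
  by_cases hc : col u.1 = col v.1
  · rw [Subtype.ext (eq_iff_row_col.2 ⟨huv, hc⟩)]
  · exact Adj.reachable (adj_iff.2 (Or.inl ⟨huv, hc⟩))

lemma reachable_of_col_eq {u v : ↥Sᶜ} (huv : col u.1 = col v.1)
    (hmid : row u.1 = 1 ∨ row v.1 = 1 ∨ col u.1 = n - 1) :
    ((G0 n h).induce Sᶜ).Reachable u v := by
  by_cases hr : row u.1 = row v.1
  · exact reachable_of_row_eq hr
  · exact Adj.reachable (adj_iff.2 (Or.inr ⟨huv, hr, hmid⟩))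

lemma reachable_of_col_disjoint {p : ℕ} (hp : p < n - 1) (hS : ∀ x ∈ S, col x ≠ p)
    (u v : ↥Sᶜ) : ((G0 n h).induce Sᶜ).Reachable u v := by
  obtain ⟨y, hy⟩ := exists_row_col (h := h) 1 p (by omega) (by omega) (by omega)
  have hub : ∀ w : ↥Sᶜ, ((G0 n h).induce Sᶜ).Reachable w ⟨y, fun hyS => hS y hyS hy.2⟩ := by
    intro w
    have := coords_spec w.1
    obtain ⟨z, hz⟩ := exists_row_col (h := h) (row w.1) p (by omega) (by omega) (by omega)
    exact (reachable_of_row_eq (v := ⟨z, fun hzS => hS z hzS hz.2⟩) hz.1.symm).trans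
      (reachable_of_col_eq (hz.2.trans hy.2.symm) (Or.inr (Or.inl hy.1)))
  exact (hub u).trans (hub v).symm

lemma reachable_of_last_col_disjoint (hS : ∀ x ∈ S, col x ≠ n - 1) {u v : ↥Sᶜ}
    (hu : row u.1 ≠ 1) (hv : row v.1 ≠ 1) : ((G0 n h).induce Sᶜ).Reachable u v := by
  have := coords_spec u.1; have := coords_spec v.1
  obtain ⟨y, hy⟩ := exists_row_col (h := h) (row u.1) (n - 1) (by omega) (by omega) (by omega)
  obtain ⟨z, hz⟩ := exists_row_col (h := h) (row v.1) (n - 1) (by omega) (by omega) (by omega)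
  exact ((reachable_of_row_eq (v := ⟨y, fun hyS => hS y hyS hy.2⟩) hy.1.symm).trans
    (reachable_of_col_eq (v := ⟨z, fun hzS => hS z hzS hz.2⟩) (hy.2.trans hz.2.symm)
      (Or.inr (Or.inr hy.2)))).trans (reachable_of_row_eq hz.1)

lemma exists_mem_of_not_reachable {x w : ↥Sᶜ} (hx : row x.1 = 1)
    (hxw : ¬ ((G0 n h).induce Sᶜ).Reachable x w) : ∃ y ∈ S, row y = row w.1 ∧ col y = col x.1 := by
  have := coords_spec x.1; have := coords_spec w.1
  obtain ⟨y, hy⟩ := exists_row_col (h := h) (row w.1) (col x.1) (by omega) (by omega) (by omega)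
  refine ⟨y, by_contra fun hyS => hxw ?_, hy⟩
  exact (reachable_of_col_eq (v := ⟨y, hyS⟩) hy.2.symm (Or.inl hx)).trans
    (reachable_of_row_eq hy.1)

lemma not_injOn_col {y z : Vert n h} (hy : y ∈ S) (hz : z ∈ S) (hr : row y ≠ row z)
    (hc : col y = col z) : ¬ InjOn col S :=
  fun hinj => hr (congrArg row (hinj hy hz hc))

lemma Iio_sub_one_subset_col_image {u v : ↥Sᶜ} (huv : ¬ ((G0 n h).induce Sᶜ).Reachable u v) :
    Iio (n - 1) ⊆ col '' S := by
  intro p hp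
  by_contra hpS
  exact huv (reachable_of_col_disjoint hp (fun x hx hxp => hpS ⟨x, hx, hxp⟩) u v)

lemma Iio_subset_col_image (hcols : Iio (n - 1) ⊆ col '' S) (hlast : n - 1 ∈ col '' S) :
    Iio n ⊆ col '' S := by
  intro p hp
  rcases Nat.lt_or_ge p (n - 1) with hp' | hp'
  · exact hcols hp'
  · rwa [show p = n - 1 by simp only [mem_Iio] at hp; omega]

lemma le_ncard_of_two_le_numComp (h2 : 2 ≤ numComp (G0 n h) S) : n ≤ S.ncard := by
  obtain ⟨u, v, huv⟩ := exists_not_reachable_of_two_le_numComp h2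
  have hcols := Iio_sub_one_subset_col_image huv
  by_cases hlast : n - 1 ∈ col '' S
  · simpa using ncard_le_of_subset_image (Iio_subset_col_image hcols hlast)
  have hS : ∀ x ∈ S, col x ≠ n - 1 := fun x hx hxc => hlast ⟨x, hx, hxc⟩
  obtain ⟨x, w, hx, hxw⟩ : ∃ x w : ↥Sᶜ, row x.1 = 1 ∧ ¬ ((G0 n h).induce Sᶜ).Reachable x w := by
    by_cases hu : row u.1 = 1
    · exact ⟨u, v, hu, huv⟩
    by_cases hv : row v.1 = 1
    · exact ⟨v, u, hv, fun hr => huv hr.symm⟩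
    exact absurd (reachable_of_last_col_disjoint hS hu hv) huv
  have hw : row w.1 ≠ 1 := fun hw => hxw (reachable_of_row_eq (hx.trans hw.symm))
  have hmem : ∀ o, o ≠ 1 → o < 3 → ∃ y ∈ S, row y = o ∧ col y = col x.1 := by
    intro o ho ho3
    obtain ⟨w', hw'⟩ := exists_row_col (h := h) o (n - 1) ho3 (by omega) (by omega)
    have hw'S : w' ∉ S := fun hw'S => hS w' hw'S hw'.2
    have := exists_mem_of_not_reachable (w := ⟨w', hw'S⟩) hx fun hr =>
      hxw (hr.trans (reachable_of_last_col_disjoint hS (by simpa [hw'.1] using ho) hw))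
    simpa [hw'.1] using this
  obtain ⟨y₀, hy₀S, hy₀⟩ := hmem 0 (by omega) (by omega)
  obtain ⟨y₂, hy₂S, hy₂⟩ := hmem 2 (by omega) (by omega)
  have := ncard_lt_of_subset_image hcols
    (not_injOn_col hy₀S hy₂S (by omega) (hy₀.2.trans hy₂.2.symm))
  rw [ncard_Iio_nat] at this
  omega

lemma lt_ncard_of_three_le_numComp (h3 : 3 ≤ numComp (G0 n h) S) : n < S.ncard := by
  obtain ⟨hsurj, hrow⟩ := surjective_and_reachable_iff_of_card_le_numComp
    (fun u : ↥Sᶜ => (⟨row u.1, (coords_spec u.1).1⟩ : Fin 3))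
    (fun u v huv => reachable_of_row_eq (congrArg Fin.val huv)) (by simpa using h3)
  have hsep : ∀ u v : ↥Sᶜ, row u.1 ≠ row v.1 → ¬ ((G0 n h).induce Sᶜ).Reachable u v :=
    fun u v huv hr => huv (congrArg Fin.val ((hrow u v).1 hr))
  obtain ⟨x₀, hx₀⟩ := hsurj 0
  obtain ⟨x₁, hx₁⟩ := hsurj 1
  obtain ⟨x₂, hx₂⟩ := hsurj 2
  simp only [Fin.ext_iff, Fin.val_zero, Fin.val_one, Fin.val_two] at hx₀ hx₁ hx₂
  have hlast : n - 1 ∈ col '' S := by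
    by_contra hlast
    exact hsep x₀ x₂ (by omega) (reachable_of_last_col_disjoint
      (fun x hx hxc => hlast ⟨x, hx, hxc⟩) (by omega) (by omega))
  obtain ⟨y₀, hy₀S, hy₀⟩ := exists_mem_of_not_reachable hx₁ (hsep x₁ x₀ (by omega))
  obtain ⟨y₂, hy₂S, hy₂⟩ := exists_mem_of_not_reachable hx₁ (hsep x₁ x₂ (by omega))
  have := ncard_lt_of_subset_image
    (Iio_subset_col_image (Iio_sub_one_subset_col_image (hsep x₀ x₁ (by omega))) hlast)
    (not_injOn_col hy₀S hy₂S (by omega) (hy₀.2.trans hy₂.2.symm))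
  rwa [ncard_Iio_nat] at this

lemma numComp_le_three (S : Set (Vert n h)) : numComp (G0 n h) S ≤ 3 := by
  simpa using numComp_le_of_reachable (fun u : ↥Sᶜ => (⟨row u.1, (coords_spec u.1).1⟩ : Fin 3))
    (fun u v huv => reachable_of_row_eq (congrArg Fin.val huv))

lemma tough_G0 (hn : 2 ≤ n) : Tough (((n : ℝ) + 1) / 3) (G0 n h) := by
  intro S h2
  have hS : (n : ℝ) ≤ S.ncard := by exact_mod_cast le_ncard_of_two_le_numComp h2
  have hn' : (2 : ℝ) ≤ n := by exact_mod_cast hn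
  rcases (show numComp (G0 n h) S = 2 ∨ numComp (G0 n h) S = 3 by
    have := numComp_le_three S; omega) with h2 | h3
  · rw [h2]; push_cast; linarith
  · have : (n : ℝ) + 1 ≤ S.ncard := by exact_mod_cast lt_ncard_of_three_le_numComp h3.ge
    rw [h3]; push_cast; linarith

end Toughness

lemma not_tough_deleteEdges_outer_row (hn : 2 ≤ n) {x y : Vert n h} (hxy : row x = row y)
    (hx : row x ≠ 1) (hc : col x ≠ col y) :
    ¬ Tough (((n : ℝ) + 1) / 3) ((G0 n h).deleteEdges {s(x, y)}) := by
  have := coords_spec x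
  obtain ⟨z, hz⟩ := exists_row_col (h := h) (2 - row x) 0 (by omega) (by omega) (by omega)
  refine not_tough_of_labeling (by positivity)
    {v | (row v = row x ∧ col v ≠ col x ∧ col v ≠ col y) ∨
      ((col v = col x ∨ col v = col y) ∧ row v ≠ row x ∧ (row v = 1 ∨ col v = n - 1))}
    (k := 3) (m := n) (by norm_num) (by push_cast; linarith)
    (fun v => if row v = row x ∧ col v = col x then 0
      else if row v = row x ∧ col v = col y then 1 else 2)
    ?_ ?_ col (fun a _ => (coords_spec a).2.1) ?_
  · intro a b ha hb hab
    rw [deleteEdges_adj_iff, adj_iff] at hab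
    have := coords_spec a; have := coords_spec b; have := coords_spec y
    grind
  · intro i hi
    interval_cases i
    · exact ⟨x, by grind, by grind⟩
    · exact ⟨y, by grind, by grind⟩
    · exact ⟨z, by grind, by grind⟩
  · intro a ha b hb hab
    have := coords_spec a; have := coords_spec b
    exact eq_iff_row_col.2 ⟨by grind, hab⟩

lemma not_tough_deleteEdges_rung (hn : 3 ≤ n) {x y : Vert n h} (hx : row x ≠ 1) (hy : row y = 1)
    (hc : col x = col y) : ¬ Tough (((n : ℝ) + 1) / 3) ((G0 n h).deleteEdges {s(x, y)}) := by
  have := coords_spec x; have := coords_spec y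
  obtain ⟨z, hz⟩ := exists_row_col (h := h) (2 - row x) (if col x = 0 then 1 else 0) (by omega)
    (by split_ifs <;> omega) (by omega)
  obtain ⟨w, hw⟩ := exists_row_col (h := h) (row x) 0 (by omega) (by omega) (by omega)
  refine not_tough_of_labeling (by positivity)
    {v | (row v ≠ 1 ∧ row v ≠ row x ∧ (col v = col x ∨ col v = n - 1)) ∨
      (row v = 1 ∧ col v ≠ col x)}
    (k := 3) (m := n) (by norm_num) (by push_cast; linarith)
    (fun v => if row v = 1 ∧ col v = col x then 0 else if row v = row x then 1 else 2)
    ?_ ?_ col (fun a _ => (coords_spec a).2.1) ?_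
  · intro a b ha hb hab
    rw [deleteEdges_adj_iff, adj_iff] at hab
    have := coords_spec a; have := coords_spec b
    grind
  · intro i hi
    interval_cases i
    · exact ⟨y, by grind, by grind⟩
    · exact ⟨w, by grind, by grind⟩
    · exact ⟨z, by grind, by grind⟩
  · intro a ha b hb hab
    have := coords_spec a; have := coords_spec b
    exact eq_iff_row_col.2 ⟨by grind, hab⟩

lemma not_tough_deleteEdges_last_col (hn : 2 ≤ n) {x y : Vert n h} (hx : row x ≠ 1)
    (hy : row y ≠ 1) (hxy : row x ≠ row y) (hcx : col x = n - 1) (hcy : col y = n - 1) :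
    ¬ Tough (((n : ℝ) + 1) / 3) ((G0 n h).deleteEdges {s(x, y)}) := by
  have := coords_spec x; have := coords_spec y
  obtain ⟨z, hz⟩ := exists_row_col (h := h) 1 0 (by omega) (by omega) (by omega)
  obtain ⟨w₀, hw₀⟩ := exists_row_col (h := h) 0 (n - 1) (by omega) (by omega) (by omega)
  obtain ⟨w₂, hw₂⟩ := exists_row_col (h := h) 2 (n - 1) (by omega) (by omega) (by omega)
  refine not_tough_of_labeling (by positivity)
    {v | (col v = 0 ∧ row v ≠ 1) ∨ (row v = 1 ∧ col v ≠ 0)}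
    (k := 3) (m := n) (by norm_num) (by push_cast; linarith)
    (fun v => if row v = 1 then 0 else if row v = 0 then 1 else 2)
    ?_ ?_ (fun v => if row v = 2 then n - 1 else col v) ?_ ?_
  · intro a b ha hb hab
    rw [deleteEdges_adj_iff, adj_iff] at hab
    have := coords_spec a; have := coords_spec b
    grind
  · intro i hi
    interval_cases i
    · exact ⟨z, by grind, by grind⟩
    · exact ⟨w₀, by grind, by grind⟩
    · exact ⟨w₂, by grind, by grind⟩
  · intro a _
    have := coords_spec a
    grind
  · intro a ha b hb hab
    have := coords_spec a; have := coords_spec b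
    exact eq_iff_row_col.2 ⟨by grind, by grind⟩

lemma not_tough_deleteEdges_middle_row_of_eq_three (hn : n = 3) {x y : Vert n h}
    (hx : row x = 1) (hy : row y = 1) (hc : col x ≠ col y) :
    ¬ Tough (((n : ℝ) + 1) / 3) ((G0 n h).deleteEdges {s(x, y)}) := by
  have := coords_spec x; have := coords_spec y
  refine not_tough_of_labeling (by positivity) {v | col v = col x ∧ row v ≠ 1}
    (k := 2) (m := 2) le_rfl (by subst hn; norm_num)
    (fun v => if row v = 1 ∧ col v = col x then 0 else 1)
    ?_ ?_ (fun v => if row v = 0 then 0 else 1) (fun a _ => by grind) ?_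
  · intro a b ha hb hab
    rw [deleteEdges_adj_iff, adj_iff] at hab
    have := coords_spec a; have := coords_spec b
    grind
  · intro i hi
    interval_cases i
    · exact ⟨x, by grind, by grind⟩
    · exact ⟨y, by grind, by grind⟩
  · intro a ha b hb hab
    have := coords_spec a; have := coords_spec b
    exact eq_iff_row_col.2 ⟨by grind, by grind⟩

lemma not_tough_deleteEdges_middle_row (hn : 4 ≤ n) {x y : Vert n h}
    (hx : row x = 1) (hy : row y = 1) (hc : col x ≠ col y) :
    ¬ Tough (((n : ℝ) + 1) / 3) ((G0 n h).deleteEdges {s(x, y)}) := by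
  have := coords_spec x; have := coords_spec y
  obtain ⟨z₀, hz₀⟩ := exists_row_col (h := h) 0
    (if col x ≠ 0 ∧ col y ≠ 0 then 0 else if col x ≠ 1 ∧ col y ≠ 1 then 1 else 2)
    (by omega) (by split_ifs <;> omega) (by omega)
  obtain ⟨w₂, hw₂⟩ := exists_row_col (h := h) 2 (n - 1) (by omega) (by omega) (by omega)
  refine not_tough_of_labeling (by positivity)
    {v | (row v ≠ 1 ∧ (col v = col x ∨ col v = col y)) ∨
      (row v = 1 ∧ col v ≠ col x ∧ col v ≠ col y) ∨ (row v = 0 ∧ col v = n - 1)}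
    (k := 4) (m := n + 2) (by norm_num) (by
      have : (4 : ℝ) ≤ n := by exact_mod_cast hn
      push_cast; linarith)
    (fun v => if row v = 1 ∧ col v = col x then 0 else if row v = 1 ∧ col v = col y then 1
      else if row v = 0 then 2 else 3)
    ?_ ?_ (fun v => if row v = 2 then (if col v = col x then n else n + 1) else col v) ?_ ?_
  · intro a b ha hb hab
    rw [deleteEdges_adj_iff, adj_iff] at hab
    have := coords_spec a; have := coords_spec b
    grind
  · intro i hi
    interval_cases i
    · exact ⟨x, by grind, by grind⟩
    · exact ⟨y, by grind, by grind⟩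
    · exact ⟨z₀, by split_ifs at hz₀ <;> grind, by grind⟩
    · exact ⟨w₂, by grind, by grind⟩
  · intro a _
    have := coords_spec a
    grind
  · intro a ha b hb hab
    have := coords_spec a; have := coords_spec b
    exact eq_iff_row_col.2 ⟨by grind, by grind⟩

lemma not_tough_deleteEdges (hn : 3 ≤ n) {x y : Vert n h} (hxy : (G0 n h).Adj x y) :
    ¬ Tough (((n : ℝ) + 1) / 3) ((G0 n h).deleteEdges {s(x, y)}) := by
  rcases adj_iff.1 hxy with ⟨hr, hc⟩ | ⟨hc, hr, hmid⟩
  · by_cases hx : row x = 1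
    · rcases (show n = 3 ∨ 4 ≤ n by omega) with hn3 | hn4
      · exact not_tough_deleteEdges_middle_row_of_eq_three hn3 hx (hr ▸ hx) hc
      · exact not_tough_deleteEdges_middle_row hn4 hx (hr ▸ hx) hc
    · exact not_tough_deleteEdges_outer_row (by omega) hr hx hc
  · by_cases hx : row x = 1
    · rw [Sym2.eq_swap]
      exact not_tough_deleteEdges_rung hn (hx ▸ Ne.symm hr) hx hc.symm
    by_cases hy : row y = 1
    · exact not_tough_deleteEdges_rung hn hx hy hc
    · have hlast : col x = n - 1 := by omega
      exact not_tough_deleteEdges_last_col (by omega) hx hy hr hlast (hc ▸ hlast)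

end G0

/-- for `n ≥ 3`, the graph `G_0` is `n`-regular and minimally
`(n+1)/3`-tough. -/
theorem G0_regular_minimally_tough (n : ℕ) (hn : 3 ≤ n) :
    (∀ v : {x : Fin 3 × Fin n // x ≠ delVert n (by omega)}, ndeg (G0 n (by omega)) v = n) ∧
    MinTough (((n : ℝ) + 1) / 3) (G0 n (by omega)) := by
  refine ⟨G0.ndeg_eq, G0.tough_G0 (by omega), fun e he => ?_⟩
  induction e using Sym2.ind with
  | h x y => exact G0.not_tough_deleteEdges hn he
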